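/- In the hard instance: (i) four distinct jobs in A∪B have demands summing to 4000γ if and only if there is a triplet τ_l=(x_i,y_j,z_k)∈𝒯 such that the four jobs are a_{X,i}, a_{Y,j}, a_{Z,k}, b_l, and likewise four distinct jobs in A'∪B' have demands summing to 4000γ if and only if they are a'_{X,i}, a'_{Y,j}, a'_{Z,k}, b'_l for some triplet τ_l=(x_i,y_j,z_k)∈𝒯; (ii) two distinct jobs in A∪A'∪B∪B' have widths summing to 40000γ if and only if they are peers. -/
import Mathlib


open scoped Classical

/-- A job on the path: source vertex `s`, sink vertex `t`, demand `d`. -/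
structure Job where
  s : ℤ
  t : ℤ
  d : ℤ
  deriving DecidableEq

/-- The width of a job. -/
def Job.w (j : Job) : ℤ := j.t - j.s

/-- Job `j` uses the edge `e_k` (joining vertices `k-1` and `k`) iff `s_j < k ≤ t_j`. -/
def Job.uses (j : Job) (k : ℤ) : Prop := j.s < k ∧ k ≤ j.t

/-- Indices of the jobs of the hard instance. -/
inductive Idx (q nd : ℕ) where
  | aX  (i : Fin q)
  | aX' (i : Fin q)
  | aY  (j : Fin q)
  | aY' (j : Fin q)
  | aZ  (k : Fin q)
  | aZ' (k : Fin q)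
  | b   (l : Fin (2 * q))
  | b'  (l : Fin (2 * q))
  | dummy (d : Fin nd)
  deriving DecidableEq, Fintype

namespace Hard

variable (q : ℕ)

def ρ : ℤ := 32 * q
def γ : ℤ := (ρ q) ^ 4 + 15

def x' (i : Fin q) : ℤ := ((i : ℕ) + 1) * ρ q + 1
def y' (j : Fin q) : ℤ := ((j : ℕ) + 1) * (ρ q) ^ 2 + 2
def z' (k : Fin q) : ℤ := ((k : ℕ) + 1) * (ρ q) ^ 3 + 4
def τ' (trip : Fin q × Fin q × Fin q) : ℤ :=
  (ρ q) ^ 4 - ((trip.2.2 : ℕ) + 1) * (ρ q) ^ 3 - ((trip.2.1 : ℕ) + 1) * (ρ q) ^ 2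
    - ((trip.1 : ℕ) + 1) * ρ q + 8

def alphaN : ℕ := (⌊(0.9690082645 : ℚ) * q⌋).toNat
def betaN : ℕ := (⌈(0.979338843 : ℚ) * q⌉).toNat
/-- The number of dummy jobs, `5q - 4β(q)`. -/
def ndN : ℕ := 5 * q - 4 * betaN q

/-- The jobs of the hard instance, given the triplets `τ`. -/
def jobOf (nd : ℕ) (τ : Fin (2 * q) → Fin q × Fin q × Fin q) : Idx q nd → Job
  | .aX i  => ⟨0, 20000 * γ q - 4 * x' q i, 999 * γ q + 4 * x' q i⟩
  | .aX' i => ⟨20000 * γ q - 4 * x' q i, 40000 * γ q, 1001 * γ q - 4 * x' q i⟩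
  | .aY j  => ⟨0, 20000 * γ q - 4 * y' q j, 999 * γ q + 4 * y' q j⟩
  | .aY' j => ⟨20000 * γ q - 4 * y' q j, 40000 * γ q, 1001 * γ q - 4 * y' q j⟩
  | .aZ k  => ⟨0, 20000 * γ q - 4 * z' q k, 999 * γ q + 4 * z' q k⟩
  | .aZ' k => ⟨20000 * γ q - 4 * z' q k, 40000 * γ q, 1001 * γ q - 4 * z' q k⟩
  | .b l   => ⟨0, 19001 * γ q - 4 * τ' q (τ l), 999 * γ q + 4 * τ' q (τ l)⟩
  | .b' l  => ⟨19001 * γ q - 4 * τ' q (τ l), 40000 * γ q, 1001 * γ q - 4 * τ' q (τ l)⟩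
  | .dummy _ => ⟨0, 40000 * γ q, 2997 * γ q⟩

/-- The given triplet family is a 2-bounded-occurrence 3-dimensional matching instance:
the `2q` triplets are pairwise distinct and each element of `X ∪ Y ∪ Z` occurs in
exactly two triplets. -/
def Is2B3DM (τ : Fin (2 * q) → Fin q × Fin q × Fin q) : Prop :=
  Function.Injective τ ∧
  (∀ i : Fin q, (Finset.univ.filter fun l => (τ l).1 = i).card = 2) ∧
  (∀ j : Fin q, (Finset.univ.filter fun l => (τ l).2.1 = j).card = 2) ∧
  (∀ k : Fin q, (Finset.univ.filter fun l => (τ l).2.2 = k).card = 2)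

/-- A matching: no two (distinct) chosen triplets agree in any coordinate. -/
def IsMatching (τ : Fin (2 * q) → Fin q × Fin q × Fin q) (M : Finset (Fin (2 * q))) : Prop :=
  ∀ l ∈ M, ∀ l' ∈ M, l ≠ l' →
    (τ l).1 ≠ (τ l').1 ∧ (τ l).2.1 ≠ (τ l').2.1 ∧ (τ l).2.2 ≠ (τ l').2.2

/-- A set `S` of jobs is a feasible round if on every edge of the path the
total demand of jobs of `S` using that edge is at most the capacity `4000 γ`. -/
def FeasibleRound {ι : Type*} (job : ι → Job) (S : Finset ι) : Prop :=
  ∀ k : ℤ, 1 ≤ k → k ≤ 40000 * γ q →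
    (∑ idx ∈ S, if (job idx).uses k then (job idx).d else 0) ≤ 4000 * γ q


end Hard

namespace Idx

variable {q nd : ℕ}

/-- The job is a dummy job. -/
def isDummy : Idx q nd → Prop
  | .dummy _ => True
  | _ => False

/-- The job belongs to `A = A_X ∪ A_Y ∪ A_Z`. -/
def inA : Idx q nd → Prop
  | .aX _ | .aY _ | .aZ _ => True
  | _ => False

/-- The job belongs to `A' = A'_X ∪ A'_Y ∪ A'_Z`. -/
def inA' : Idx q nd → Prop
  | .aX' _ | .aY' _ | .aZ' _ => True
  | _ => False

/-- The job belongs to `B`. -/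
def inB : Idx q nd → Prop
  | .b _ => True
  | _ => False

/-- The job belongs to `B'`. -/
def inB' : Idx q nd → Prop
  | .b' _ => True
  | _ => False

/-- The job belongs to `A ∪ B`. -/
def inAB : Idx q nd → Prop
  | .aX _ | .aY _ | .aZ _ | .b _ => True
  | _ => False

/-- The job belongs to `A' ∪ B'`. -/
def inA'B' : Idx q nd → Prop
  | .aX' _ | .aY' _ | .aZ' _ | .b' _ => True
  | _ => False

end Idx

namespace HIAux
open Hard

variable {q nd : ℕ}

def tg : Idx q nd → ℤ
  | .aX _ => 1
  | .aX' _ => 1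
  | .aY _ => 2
  | .aY' _ => 2
  | .aZ _ => 4
  | .aZ' _ => 4
  | .b _ => 8
  | .b' _ => 8
  | .dummy _ => 0

def e1 (τ : Fin (2 * q) → Fin q × Fin q × Fin q) : Idx q nd → ℤ
  | .aX i => ((i : ℕ) : ℤ) + 1
  | .aX' i => ((i : ℕ) : ℤ) + 1
  | .aY _ => 0
  | .aY' _ => 0
  | .aZ _ => 0
  | .aZ' _ => 0
  | .b l => -((((τ l).1 : ℕ) : ℤ) + 1)
  | .b' l => -((((τ l).1 : ℕ) : ℤ) + 1)
  | .dummy _ => 0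

def e2 (τ : Fin (2 * q) → Fin q × Fin q × Fin q) : Idx q nd → ℤ
  | .aX _ => 0
  | .aX' _ => 0
  | .aY j => ((j : ℕ) : ℤ) + 1
  | .aY' j => ((j : ℕ) : ℤ) + 1
  | .aZ _ => 0
  | .aZ' _ => 0
  | .b l => -((((τ l).2.1 : ℕ) : ℤ) + 1)
  | .b' l => -((((τ l).2.1 : ℕ) : ℤ) + 1)
  | .dummy _ => 0

def e3 (τ : Fin (2 * q) → Fin q × Fin q × Fin q) : Idx q nd → ℤ
  | .aX _ => 0
  | .aX' _ => 0
  | .aY _ => 0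
  | .aY' _ => 0
  | .aZ k => ((k : ℕ) : ℤ) + 1
  | .aZ' k => ((k : ℕ) : ℤ) + 1
  | .b l => -((((τ l).2.2 : ℕ) : ℤ) + 1)
  | .b' l => -((((τ l).2.2 : ℕ) : ℤ) + 1)
  | .dummy _ => 0

def c4 : Idx q nd → ℤ
  | .b _ => 1
  | .b' _ => 1
  | _ => 0

def sg : Idx q nd → ℤ
  | .aX _ => -1
  | .aY _ => -1
  | .aZ _ => -1
  | .b _ => -1
  | _ => 1

def gco : Idx q nd → ℤ
  | .b _ => 19001
  | .b' _ => 20999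
  | .dummy _ => 0
  | _ => 20000

def dv (τ : Fin (2 * q) → Fin q × Fin q × Fin q) (idx : Idx q nd) : ℤ :=
  e1 τ idx * ρ q + e2 τ idx * ρ q ^ 2 + e3 τ idx * ρ q ^ 3 + c4 idx * ρ q ^ 4 + tg idx

lemma d_eq_AB (τ : Fin (2 * q) → Fin q × Fin q × Fin q) (idx : Idx q nd) (h : idx.inAB) :
    (jobOf q nd τ idx).d = 999 * γ q + 4 * dv τ idx := by
  cases idx <;>
    first
    | exact False.elim h
    | (simp only [jobOf, dv, e1, e2, e3, c4, tg, x', y', z', τ']; push_cast; ring)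

lemma d_eq_A'B' (τ : Fin (2 * q) → Fin q × Fin q × Fin q) (idx : Idx q nd) (h : idx.inA'B') :
    (jobOf q nd τ idx).d = 1001 * γ q - 4 * dv τ idx := by
  cases idx <;>
    first
    | exact False.elim h
    | (simp only [jobOf, dv, e1, e2, e3, c4, tg, x', y', z', τ']; push_cast; ring)

lemma w_eq (τ : Fin (2 * q) → Fin q × Fin q × Fin q) (idx : Idx q nd) (h : ¬ idx.isDummy) :
    (jobOf q nd τ idx).w = gco idx * γ q + sg idx * (4 * dv τ idx) := by
  cases idx <;>
    first
    | exact False.elim (h trivial)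
    | (simp only [jobOf, Job.w, dv, e1, e2, e3, c4, tg, sg, gco, x', y', z', τ'];
       push_cast; ring)



lemma digitStep {r a b : ℤ} (hr : 0 < r) (h1 : -r < a) (h2 : a < r)
    (h : a + r * b = 0) : a = 0 ∧ b = 0 := by
  have hb : b = 0 := by
    rcases lt_trichotomy b 0 with hb | hb | hb
    · have hb1 : b ≤ -1 := by omega
      nlinarith [mul_le_mul_of_nonneg_left hb1 hr.le]
    · exact hb
    · have hb1 : 1 ≤ b := by omega
      nlinarith [mul_le_mul_of_nonneg_left hb1 hr.le]
  subst hb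
  rw [mul_zero, add_zero] at h
  exact ⟨h, rfl⟩

lemma keyDigits {q : ℕ} (hq : 1 ≤ q) {E1 E2 E3 C T : ℤ}
    (h1l : -(4 * (q : ℤ)) ≤ E1) (h1u : E1 ≤ 4 * (q : ℤ))
    (h2l : -(4 * (q : ℤ)) ≤ E2) (h2u : E2 ≤ 4 * (q : ℤ))
    (h3l : -(4 * (q : ℤ)) ≤ E3) (h3u : E3 ≤ 4 * (q : ℤ))
    (hCl : 0 ≤ C) (hCu : C ≤ 4) (hTl : 0 ≤ T) (hTu : T ≤ 32)
    (h : E1 * ρ q + E2 * ρ q ^ 2 + E3 * ρ q ^ 3 + C * ρ q ^ 4 + T = ρ q ^ 4 + 15) :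
    E1 = 0 ∧ E2 = 0 ∧ E3 = 0 ∧ C = 1 ∧ T = 15 := by
  have hq' : (1 : ℤ) ≤ (q : ℤ) := by exact_mod_cast hq
  have hr : ρ q = 32 * (q : ℤ) := rfl
  have hrpos : 0 < ρ q := by omega
  have s1 : (T - 15) + ρ q * (E1 + E2 * ρ q + E3 * ρ q ^ 2 + (C - 1) * ρ q ^ 3) = 0 := by
    linear_combination h
  obtain ⟨hT15, r1⟩ := digitStep hrpos (by omega) (by omega) s1
  have s2 : E1 + ρ q * (E2 + E3 * ρ q + (C - 1) * ρ q ^ 2) = 0 := by linear_combination r1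
  obtain ⟨hE1, r2⟩ := digitStep hrpos (by omega) (by omega) s2
  have s3 : E2 + ρ q * (E3 + (C - 1) * ρ q) = 0 := by linear_combination r2
  obtain ⟨hE2, r3⟩ := digitStep hrpos (by omega) (by omega) s3
  have s4 : E3 + ρ q * (C - 1) = 0 := by linear_combination r3
  obtain ⟨hE3, r4⟩ := digitStep hrpos (by omega) (by omega) s4
  exact ⟨hE1, hE2, hE3, by omega, by omega⟩

lemma keyZero {q : ℕ} (hq : 1 ≤ q) {F1 F2 F3 C T : ℤ}
    (h1l : -(2 * (q : ℤ)) ≤ F1) (h1u : F1 ≤ 2 * (q : ℤ))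
    (h2l : -(2 * (q : ℤ)) ≤ F2) (h2u : F2 ≤ 2 * (q : ℤ))
    (h3l : -(2 * (q : ℤ)) ≤ F3) (h3u : F3 ≤ 2 * (q : ℤ))
    (hCl : -2 ≤ C) (hCu : C ≤ 2) (hTl : -16 ≤ T) (hTu : T ≤ 16)
    (h : F1 * ρ q + F2 * ρ q ^ 2 + F3 * ρ q ^ 3 + C * ρ q ^ 4 + T = 0) :
    F1 = 0 ∧ F2 = 0 ∧ F3 = 0 ∧ C = 0 ∧ T = 0 := by
  have hq' : (1 : ℤ) ≤ (q : ℤ) := by exact_mod_cast hq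
  have hr : ρ q = 32 * (q : ℤ) := rfl
  have hrpos : 0 < ρ q := by omega
  have s1 : T + ρ q * (F1 + F2 * ρ q + F3 * ρ q ^ 2 + C * ρ q ^ 3) = 0 := by
    linear_combination h
  obtain ⟨hT, r1⟩ := digitStep hrpos (by omega) (by omega) s1
  have s2 : F1 + ρ q * (F2 + F3 * ρ q + C * ρ q ^ 2) = 0 := by linear_combination r1
  obtain ⟨hF1, r2⟩ := digitStep hrpos (by omega) (by omega) s2
  have s3 : F2 + ρ q * (F3 + C * ρ q) = 0 := by linear_combination r2
  obtain ⟨hF2, r3⟩ := digitStep hrpos (by omega) (by omega) s3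
  have s4 : F3 + ρ q * C = 0 := by linear_combination r3
  obtain ⟨hF3, r4⟩ := digitStep hrpos (by omega) (by omega) s4
  exact ⟨hF1, hF2, hF3, r4, hT⟩



variable {q nd : ℕ}

lemma e1_bounds (τ : Fin (2 * q) → Fin q × Fin q × Fin q) :
    ∀ idx : Idx q nd, -(q : ℤ) ≤ e1 τ idx ∧ e1 τ idx ≤ (q : ℤ)
  | .aX i => by have := i.isLt; simp only [e1]; omega
  | .aX' i => by have := i.isLt; simp only [e1]; omega
  | .aY _ => by simp only [e1]; omega
  | .aY' _ => by simp only [e1]; omega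
  | .aZ _ => by simp only [e1]; omega
  | .aZ' _ => by simp only [e1]; omega
  | .b l => by have := ((τ l).1).isLt; simp only [e1]; omega
  | .b' l => by have := ((τ l).1).isLt; simp only [e1]; omega
  | .dummy _ => by simp only [e1]; omega

lemma e2_bounds (τ : Fin (2 * q) → Fin q × Fin q × Fin q) :
    ∀ idx : Idx q nd, -(q : ℤ) ≤ e2 τ idx ∧ e2 τ idx ≤ (q : ℤ)
  | .aX _ => by simp only [e2]; omega
  | .aX' _ => by simp only [e2]; omega
  | .aY j => by have := j.isLt; simp only [e2]; omega
  | .aY' j => by have := j.isLt; simp only [e2]; omega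
  | .aZ _ => by simp only [e2]; omega
  | .aZ' _ => by simp only [e2]; omega
  | .b l => by have := ((τ l).2.1).isLt; simp only [e2]; omega
  | .b' l => by have := ((τ l).2.1).isLt; simp only [e2]; omega
  | .dummy _ => by simp only [e2]; omega

lemma e3_bounds (τ : Fin (2 * q) → Fin q × Fin q × Fin q) :
    ∀ idx : Idx q nd, -(q : ℤ) ≤ e3 τ idx ∧ e3 τ idx ≤ (q : ℤ)
  | .aX _ => by simp only [e3]; omega
  | .aX' _ => by simp only [e3]; omega
  | .aY _ => by simp only [e3]; omega
  | .aY' _ => by simp only [e3]; omega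
  | .aZ k => by have := k.isLt; simp only [e3]; omega
  | .aZ' k => by have := k.isLt; simp only [e3]; omega
  | .b l => by have := ((τ l).2.2).isLt; simp only [e3]; omega
  | .b' l => by have := ((τ l).2.2).isLt; simp only [e3]; omega
  | .dummy _ => by simp only [e3]; omega

lemma c4_bounds : ∀ idx : Idx q nd, 0 ≤ c4 idx ∧ c4 idx ≤ 1 := by
  intro idx; cases idx <;> simp [c4]

lemma tg_bounds : ∀ idx : Idx q nd, 0 ≤ tg idx ∧ tg idx ≤ 8 := by
  intro idx; cases idx <;> simp [tg]

lemma tg_bounds_AB (idx : Idx q nd) (h : idx.inAB) : 1 ≤ tg idx ∧ tg idx ≤ 8 := by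
  cases idx <;> first | exact False.elim h | simp [tg]

lemma tg_bounds_A'B' (idx : Idx q nd) (h : idx.inA'B') : 1 ≤ tg idx ∧ tg idx ≤ 8 := by
  cases idx <;> first | exact False.elim h | simp [tg]

lemma sg_cases : ∀ idx : Idx q nd, sg idx = 1 ∨ sg idx = -1 := by
  intro idx; cases idx <;> simp [sg]

lemma gco_cases (idx : Idx q nd) (h : ¬ idx.isDummy) :
    gco idx = 20000 ∨ gco idx = 19001 ∨ gco idx = 20999 := by
  cases idx <;> first | exact False.elim (h trivial) | simp [gco]

lemma shapeAB (idx : Idx q nd) (h : idx.inAB) :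
    (∃ i, idx = Idx.aX i) ∨ (∃ j, idx = Idx.aY j) ∨ (∃ k, idx = Idx.aZ k) ∨
      (∃ l, idx = Idx.b l) := by
  cases idx <;> first
    | exact False.elim h
    | exact Or.inl ⟨_, rfl⟩
    | exact Or.inr (Or.inl ⟨_, rfl⟩)
    | exact Or.inr (Or.inr (Or.inl ⟨_, rfl⟩))
    | exact Or.inr (Or.inr (Or.inr ⟨_, rfl⟩))

lemma shapeA'B' (idx : Idx q nd) (h : idx.inA'B') :
    (∃ i, idx = Idx.aX' i) ∨ (∃ j, idx = Idx.aY' j) ∨ (∃ k, idx = Idx.aZ' k) ∨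
      (∃ l, idx = Idx.b' l) := by
  cases idx <;> first
    | exact False.elim h
    | exact Or.inl ⟨_, rfl⟩
    | exact Or.inr (Or.inl ⟨_, rfl⟩)
    | exact Or.inr (Or.inr (Or.inl ⟨_, rfl⟩))
    | exact Or.inr (Or.inr (Or.inr ⟨_, rfl⟩))

lemma shapeND (idx : Idx q nd) (h : ¬ idx.isDummy) :
    (∃ i, idx = Idx.aX i) ∨ (∃ i, idx = Idx.aX' i) ∨
    (∃ j, idx = Idx.aY j) ∨ (∃ j, idx = Idx.aY' j) ∨
    (∃ k, idx = Idx.aZ k) ∨ (∃ k, idx = Idx.aZ' k) ∨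
    (∃ l, idx = Idx.b l) ∨ (∃ l, idx = Idx.b' l) := by
  cases idx with
  | aX i => exact Or.inl ⟨_, rfl⟩
  | aX' i => exact Or.inr (Or.inl ⟨_, rfl⟩)
  | aY j => exact Or.inr (Or.inr (Or.inl ⟨_, rfl⟩))
  | aY' j => exact Or.inr (Or.inr (Or.inr (Or.inl ⟨_, rfl⟩)))
  | aZ k => exact Or.inr (Or.inr (Or.inr (Or.inr (Or.inl ⟨_, rfl⟩))))
  | aZ' k => exact Or.inr (Or.inr (Or.inr (Or.inr (Or.inr (Or.inl ⟨_, rfl⟩)))))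
  | b l => exact Or.inr (Or.inr (Or.inr (Or.inr (Or.inr (Or.inr (Or.inl ⟨_, rfl⟩))))))
  | b' l => exact Or.inr (Or.inr (Or.inr (Or.inr (Or.inr (Or.inr (Or.inr ⟨_, rfl⟩))))))
  | dummy d => exact False.elim (h trivial)

lemma card4 {α : Type*} [DecidableEq α] {S : Finset α} (h : S.card = 4) :
    ∃ a b c d : α, a ≠ b ∧ a ≠ c ∧ a ≠ d ∧ b ≠ c ∧ b ≠ d ∧ c ≠ d ∧
      S = {a, b, c, d} := by
  obtain ⟨a, T, haT, rfl, hT3⟩ := Finset.card_eq_succ.mp h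
  obtain ⟨b, c, d, hbc, hbd, hcd, rfl⟩ := Finset.card_eq_three.mp hT3
  simp only [Finset.mem_insert, Finset.mem_singleton, not_or] at haT
  exact ⟨a, b, c, d, haT.1, haT.2.1, haT.2.2, hbc, hbd, hcd, rfl⟩



set_option maxHeartbeats 2000000 in
lemma fwdAB (hq : 1 ≤ q) (τ : Fin (2 * q) → Fin q × Fin q × Fin q)
    (a b c d : Idx q nd) (ha : a.inAB) (hb : b.inAB) (hc : c.inAB) (hd : d.inAB)
    (heq : dv τ a + dv τ b + dv τ c + dv τ d = γ q) :
    ∃ l, ({a, b, c, d} : Finset (Idx q nd)) =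
      {Idx.aX (τ l).1, Idx.aY (τ l).2.1, Idx.aZ (τ l).2.2, Idx.b l} := by
  have Ba1 := e1_bounds τ a; have Bb1 := e1_bounds τ b
  have Bc1 := e1_bounds τ c; have Bd1 := e1_bounds τ d
  have Ba2 := e2_bounds τ a; have Bb2 := e2_bounds τ b
  have Bc2 := e2_bounds τ c; have Bd2 := e2_bounds τ d
  have Ba3 := e3_bounds τ a; have Bb3 := e3_bounds τ b
  have Bc3 := e3_bounds τ c; have Bd3 := e3_bounds τ d
  have Ba4 := c4_bounds a; have Bb4 := c4_bounds b
  have Bc4 := c4_bounds c; have Bd4 := c4_bounds d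
  have Bat := tg_bounds_AB a ha; have Bbt := tg_bounds_AB b hb
  have Bct := tg_bounds_AB c hc; have Bdt := tg_bounds_AB d hd
  have h : (e1 τ a + e1 τ b + e1 τ c + e1 τ d) * ρ q
      + (e2 τ a + e2 τ b + e2 τ c + e2 τ d) * ρ q ^ 2
      + (e3 τ a + e3 τ b + e3 τ c + e3 τ d) * ρ q ^ 3
      + (c4 a + c4 b + c4 c + c4 d) * ρ q ^ 4
      + (tg a + tg b + tg c + tg d) = ρ q ^ 4 + 15 := by
    simp only [dv, Hard.γ] at heq
    linear_combination heq
  obtain ⟨hE1, hE2, hE3, hC, hT⟩ := keyDigits hq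
    (by linarith [Ba1.1, Bb1.1, Bc1.1, Bd1.1]) (by linarith [Ba1.2, Bb1.2, Bc1.2, Bd1.2])
    (by linarith [Ba2.1, Bb2.1, Bc2.1, Bd2.1]) (by linarith [Ba2.2, Bb2.2, Bc2.2, Bd2.2])
    (by linarith [Ba3.1, Bb3.1, Bc3.1, Bd3.1]) (by linarith [Ba3.2, Bb3.2, Bc3.2, Bd3.2])
    (by linarith [Ba4.1, Bb4.1, Bc4.1, Bd4.1]) (by linarith [Ba4.2, Bb4.2, Bc4.2, Bd4.2])
    (by linarith [Bat.1, Bbt.1, Bct.1, Bdt.1]) (by linarith [Bat.2, Bbt.2, Bct.2, Bdt.2])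
    h
  clear h heq Ba1 Bb1 Bc1 Bd1 Ba2 Bb2 Bc2 Bd2 Ba3 Bb3 Bc3 Bd3 Ba4 Bb4 Bc4 Bd4 Bat Bbt Bct Bdt
  rcases shapeAB a ha with ⟨iX, rfl⟩ | ⟨iY, rfl⟩ | ⟨iZ, rfl⟩ | ⟨l, rfl⟩ <;>
  rcases shapeAB b hb with ⟨iX, rfl⟩ | ⟨iY, rfl⟩ | ⟨iZ, rfl⟩ | ⟨l, rfl⟩ <;>
  rcases shapeAB c hc with ⟨iX, rfl⟩ | ⟨iY, rfl⟩ | ⟨iZ, rfl⟩ | ⟨l, rfl⟩ <;>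
  rcases shapeAB d hd with ⟨iX, rfl⟩ | ⟨iY, rfl⟩ | ⟨iZ, rfl⟩ | ⟨l, rfl⟩ <;>
  simp only [tg, e1, e2, e3] at hT hE1 hE2 hE3 <;>
  first
  | omega
  | (refine ⟨l, ?_⟩
     have h1 : iX = (τ l).1 := Fin.ext (by omega)
     have h2 : iY = (τ l).2.1 := Fin.ext (by omega)
     have h3 : iZ = (τ l).2.2 := Fin.ext (by omega)
     simp only [h1, h2, h3]
     try (ext x; simp only [Finset.mem_insert, Finset.mem_singleton]; tauto))

set_option maxHeartbeats 2000000 in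
lemma fwdA'B'  (hq : 1 ≤ q) (τ : Fin (2 * q) → Fin q × Fin q × Fin q)
    (a b c d : Idx q nd) (ha : a.inA'B') (hb : b.inA'B') (hc : c.inA'B') (hd : d.inA'B')
    (heq : dv τ a + dv τ b + dv τ c + dv τ d = γ q) :
    ∃ l, ({a, b, c, d} : Finset (Idx q nd)) =
      {Idx.aX' (τ l).1, Idx.aY' (τ l).2.1, Idx.aZ' (τ l).2.2, Idx.b' l} := by
  have Ba1 := e1_bounds τ a; have Bb1 := e1_bounds τ b
  have Bc1 := e1_bounds τ c; have Bd1 := e1_bounds τ d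
  have Ba2 := e2_bounds τ a; have Bb2 := e2_bounds τ b
  have Bc2 := e2_bounds τ c; have Bd2 := e2_bounds τ d
  have Ba3 := e3_bounds τ a; have Bb3 := e3_bounds τ b
  have Bc3 := e3_bounds τ c; have Bd3 := e3_bounds τ d
  have Ba4 := c4_bounds a; have Bb4 := c4_bounds b
  have Bc4 := c4_bounds c; have Bd4 := c4_bounds d
  have Bat := tg_bounds_A'B' a ha; have Bbt := tg_bounds_A'B' b hb
  have Bct := tg_bounds_A'B' c hc; have Bdt := tg_bounds_A'B' d hd
  have h : (e1 τ a + e1 τ b + e1 τ c + e1 τ d) * ρ q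
      + (e2 τ a + e2 τ b + e2 τ c + e2 τ d) * ρ q ^ 2
      + (e3 τ a + e3 τ b + e3 τ c + e3 τ d) * ρ q ^ 3
      + (c4 a + c4 b + c4 c + c4 d) * ρ q ^ 4
      + (tg a + tg b + tg c + tg d) = ρ q ^ 4 + 15 := by
    simp only [dv, Hard.γ] at heq
    linear_combination heq
  obtain ⟨hE1, hE2, hE3, hC, hT⟩ := keyDigits hq
    (by linarith [Ba1.1, Bb1.1, Bc1.1, Bd1.1]) (by linarith [Ba1.2, Bb1.2, Bc1.2, Bd1.2])
    (by linarith [Ba2.1, Bb2.1, Bc2.1, Bd2.1]) (by linarith [Ba2.2, Bb2.2, Bc2.2, Bd2.2])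
    (by linarith [Ba3.1, Bb3.1, Bc3.1, Bd3.1]) (by linarith [Ba3.2, Bb3.2, Bc3.2, Bd3.2])
    (by linarith [Ba4.1, Bb4.1, Bc4.1, Bd4.1]) (by linarith [Ba4.2, Bb4.2, Bc4.2, Bd4.2])
    (by linarith [Bat.1, Bbt.1, Bct.1, Bdt.1]) (by linarith [Bat.2, Bbt.2, Bct.2, Bdt.2])
    h
  clear h heq Ba1 Bb1 Bc1 Bd1 Ba2 Bb2 Bc2 Bd2 Ba3 Bb3 Bc3 Bd3 Ba4 Bb4 Bc4 Bd4 Bat Bbt Bct Bdt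
  rcases shapeA'B' a ha with ⟨iX, rfl⟩ | ⟨iY, rfl⟩ | ⟨iZ, rfl⟩ | ⟨l, rfl⟩ <;>
  rcases shapeA'B' b hb with ⟨iX, rfl⟩ | ⟨iY, rfl⟩ | ⟨iZ, rfl⟩ | ⟨l, rfl⟩ <;>
  rcases shapeA'B' c hc with ⟨iX, rfl⟩ | ⟨iY, rfl⟩ | ⟨iZ, rfl⟩ | ⟨l, rfl⟩ <;>
  rcases shapeA'B' d hd with ⟨iX, rfl⟩ | ⟨iY, rfl⟩ | ⟨iZ, rfl⟩ | ⟨l, rfl⟩ <;>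
  simp only [tg, e1, e2, e3] at hT hE1 hE2 hE3 <;>
  first
  | omega
  | (refine ⟨l, ?_⟩
     have h1 : iX = (τ l).1 := Fin.ext (by omega)
     have h2 : iY = (τ l).2.1 := Fin.ext (by omega)
     have h3 : iZ = (τ l).2.2 := Fin.ext (by omega)
     simp only [h1, h2, h3]
     try (ext x; simp only [Finset.mem_insert, Finset.mem_singleton]; tauto))

set_option maxHeartbeats 1000000 in
lemma totalBound (hq : 1 ≤ q) {F1 F2 F3 C T : ℤ}
    (h1l : -(2 * (q : ℤ)) ≤ F1) (h1u : F1 ≤ 2 * (q : ℤ))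
    (h2l : -(2 * (q : ℤ)) ≤ F2) (h2u : F2 ≤ 2 * (q : ℤ))
    (h3l : -(2 * (q : ℤ)) ≤ F3) (h3u : F3 ≤ 2 * (q : ℤ))
    (hCl : -2 ≤ C) (hCu : C ≤ 2) (hTl : -16 ≤ T) (hTu : T ≤ 16) :
    -(21 * γ q) ≤ 4 * (F1 * ρ q + F2 * ρ q ^ 2 + F3 * ρ q ^ 3 + C * ρ q ^ 4 + T) ∧
    4 * (F1 * ρ q + F2 * ρ q ^ 2 + F3 * ρ q ^ 3 + C * ρ q ^ 4 + T) ≤ 21 * γ q := by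
  have hq1 : (1 : ℤ) ≤ (q : ℤ) := by exact_mod_cast hq
  have hr : ρ q = 32 * (q : ℤ) := rfl
  have hγ : γ q = ρ q ^ 4 + 15 := rfl
  have hrpos : (0 : ℤ) < ρ q := by omega
  have hr2 : (0 : ℤ) ≤ ρ q ^ 2 := sq_nonneg _
  have hr3 : (0 : ℤ) ≤ ρ q ^ 3 := by positivity
  have hr4 : (0 : ℤ) ≤ ρ q ^ 4 := by positivity
  have k1u : F1 * ρ q ≤ 2 * (q : ℤ) * ρ q := mul_le_mul_of_nonneg_right h1u hrpos.le
  have k1l : -(2 * (q : ℤ)) * ρ q ≤ F1 * ρ q := mul_le_mul_of_nonneg_right h1l hrpos.le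
  have k2u : F2 * ρ q ^ 2 ≤ 2 * (q : ℤ) * ρ q ^ 2 := mul_le_mul_of_nonneg_right h2u hr2
  have k2l : -(2 * (q : ℤ)) * ρ q ^ 2 ≤ F2 * ρ q ^ 2 := mul_le_mul_of_nonneg_right h2l hr2
  have k3u : F3 * ρ q ^ 3 ≤ 2 * (q : ℤ) * ρ q ^ 3 := mul_le_mul_of_nonneg_right h3u hr3
  have k3l : -(2 * (q : ℤ)) * ρ q ^ 3 ≤ F3 * ρ q ^ 3 := mul_le_mul_of_nonneg_right h3l hr3
  have kCu : C * ρ q ^ 4 ≤ 2 * ρ q ^ 4 := mul_le_mul_of_nonneg_right hCu hr4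
  have kCl : (-2) * ρ q ^ 4 ≤ C * ρ q ^ 4 := mul_le_mul_of_nonneg_right hCl hr4
  have hq0 : (0 : ℤ) ≤ (q : ℤ) := by linarith
  have hq2 : (q : ℤ) ^ 2 ≤ (q : ℤ) ^ 4 := by
    nlinarith [mul_nonneg (mul_nonneg (sq_nonneg (q : ℤ)) (by linarith : (0:ℤ) ≤ (q:ℤ) - 1)) (by linarith : (0:ℤ) ≤ (q:ℤ) + 1)]
  have hq3 : (q : ℤ) ^ 3 ≤ (q : ℤ) ^ 4 := by
    nlinarith [mul_nonneg (pow_nonneg hq0 3) (by linarith : (0:ℤ) ≤ (q:ℤ) - 1)]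
  have hA : 2 * (q : ℤ) * ρ q ≤ γ q := by rw [hr, hγ, hr]; nlinarith [hq2]
  have hB : 2 * (q : ℤ) * ρ q ^ 2 ≤ γ q := by rw [hr, hγ, hr]; nlinarith [hq3]
  have hC3 : 2 * (q : ℤ) * ρ q ^ 3 ≤ γ q := by rw [hr, hγ, hr]; nlinarith [hq1, pow_nonneg hq0 4]
  have hD : 2 * ρ q ^ 4 ≤ 2 * γ q := by rw [hγ]; linarith
  have hE : (64 : ℤ) ≤ γ q := by
    rw [hγ, hr]
    nlinarith [sq_nonneg ((q:ℤ) - 1), sq_nonneg ((q:ℤ)^2 - 1), sq_nonneg ((q:ℤ))]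
  constructor <;> linarith [hA, hB, hC3, hD, hE, k1u, k1l, k2u, k2l, k3u, k3l, kCu, kCl]

lemma sgBound {s E B : ℤ} (hs : s = 1 ∨ s = -1) (hl : -B ≤ E) (hu : E ≤ B) :
    -B ≤ s * E ∧ s * E ≤ B := by
  rcases hs with h | h <;> subst h <;> constructor <;> linarith

set_option maxHeartbeats 2000000 in
lemma fwdW (hq : 1 ≤ q) (τ : Fin (2 * q) → Fin q × Fin q × Fin q)
    (hinj : Function.Injective τ)
    (a b : Idx q nd) (ha : ¬ a.isDummy) (hb : ¬ b.isDummy)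
    (heq : (jobOf q nd τ a).w + (jobOf q nd τ b).w = 40000 * γ q) :
    (∃ i, ({a, b} : Finset (Idx q nd)) = {Idx.aX i, Idx.aX' i}) ∨
    (∃ j, ({a, b} : Finset (Idx q nd)) = {Idx.aY j, Idx.aY' j}) ∨
    (∃ k, ({a, b} : Finset (Idx q nd)) = {Idx.aZ k, Idx.aZ' k}) ∨
    (∃ l, ({a, b} : Finset (Idx q nd)) = {Idx.b l, Idx.b' l}) := by
  have hγpos : 0 < γ q := by
    have hγd : γ q = ρ q ^ 4 + 15 := rfl
    rw [hγd]; positivity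
  rw [w_eq τ a ha, w_eq τ b hb] at heq
  have Sa := sg_cases a; have Sb := sg_cases b
  have K1a := sgBound Sa (e1_bounds τ a).1 (e1_bounds τ a).2
  have K1b := sgBound Sb (e1_bounds τ b).1 (e1_bounds τ b).2
  have K2a := sgBound Sa (e2_bounds τ a).1 (e2_bounds τ a).2
  have K2b := sgBound Sb (e2_bounds τ b).1 (e2_bounds τ b).2
  have K3a := sgBound Sa (e3_bounds τ a).1 (e3_bounds τ a).2
  have K3b := sgBound Sb (e3_bounds τ b).1 (e3_bounds τ b).2
  have K4a := sgBound Sa (by linarith [(c4_bounds a).1] : -(1:ℤ) ≤ c4 a) (c4_bounds a).2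
  have K4b := sgBound Sb (by linarith [(c4_bounds b).1] : -(1:ℤ) ≤ c4 b) (c4_bounds b).2
  have KTa := sgBound Sa (by linarith [(tg_bounds a).1] : -(8:ℤ) ≤ tg a) (tg_bounds a).2
  have KTb := sgBound Sb (by linarith [(tg_bounds b).1] : -(8:ℤ) ≤ tg b) (tg_bounds b).2
  have key : (gco a + gco b - 40000) * γ q
      + 4 * ((sg a * e1 τ a + sg b * e1 τ b) * ρ q
        + (sg a * e2 τ a + sg b * e2 τ b) * ρ q ^ 2
        + (sg a * e3 τ a + sg b * e3 τ b) * ρ q ^ 3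
        + (sg a * c4 a + sg b * c4 b) * ρ q ^ 4
        + (sg a * tg a + sg b * tg b)) = 0 := by
    simp only [dv] at heq
    linear_combination heq
  have TB := totalBound (q := q)
    (F1 := sg a * e1 τ a + sg b * e1 τ b)
    (F2 := sg a * e2 τ a + sg b * e2 τ b)
    (F3 := sg a * e3 τ a + sg b * e3 τ b)
    (C := sg a * c4 a + sg b * c4 b)
    (T := sg a * tg a + sg b * tg b) hq
    (by linarith [K1a.1, K1b.1]) (by linarith [K1a.2, K1b.2])
    (by linarith [K2a.1, K2b.1]) (by linarith [K2a.2, K2b.2])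
    (by linarith [K3a.1, K3b.1]) (by linarith [K3a.2, K3b.2])
    (by linarith [K4a.1, K4b.1]) (by linarith [K4a.2, K4b.2])
    (by linarith [KTa.1, KTb.1]) (by linarith [KTa.2, KTb.2])
  have hM : gco a + gco b = 40000 := by
    rcases gco_cases a ha with g | g | g <;> rcases gco_cases b hb with g' | g' | g' <;>
      rw [g, g'] at key <;> rw [g, g'] <;> (try norm_num) <;>
      (exfalso; linarith [TB.1, TB.2, hγpos, key])
  rw [hM] at key
  have hz : (sg a * e1 τ a + sg b * e1 τ b) * ρ q
      + (sg a * e2 τ a + sg b * e2 τ b) * ρ q ^ 2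
      + (sg a * e3 τ a + sg b * e3 τ b) * ρ q ^ 3
      + (sg a * c4 a + sg b * c4 b) * ρ q ^ 4
      + (sg a * tg a + sg b * tg b) = 0 := by linarith [key]
  obtain ⟨hF1, hF2, hF3, hC, hT⟩ := keyZero hq
    (by linarith [K1a.1, K1b.1]) (by linarith [K1a.2, K1b.2])
    (by linarith [K2a.1, K2b.1]) (by linarith [K2a.2, K2b.2])
    (by linarith [K3a.1, K3b.1]) (by linarith [K3a.2, K3b.2])
    (by linarith [K4a.1, K4b.1]) (by linarith [K4a.2, K4b.2])
    (by linarith [KTa.1, KTb.1]) (by linarith [KTa.2, KTb.2])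
    hz
  clear key hz heq TB K1a K1b K2a K2b K3a K3b K4a K4b KTa KTb Sa Sb hM hC
  rcases shapeND a ha with ⟨iX, rfl⟩ | ⟨iX', rfl⟩ | ⟨iY, rfl⟩ | ⟨iY', rfl⟩ |
    ⟨iZ, rfl⟩ | ⟨iZ', rfl⟩ | ⟨l, rfl⟩ | ⟨l', rfl⟩ <;>
  rcases shapeND b hb with ⟨iX, rfl⟩ | ⟨iX', rfl⟩ | ⟨iY, rfl⟩ | ⟨iY', rfl⟩ |
    ⟨iZ, rfl⟩ | ⟨iZ', rfl⟩ | ⟨l, rfl⟩ | ⟨l', rfl⟩ <;>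
  simp only [sg, tg, e1, e2, e3] at hT hF1 hF2 hF3 <;>
  first
  | omega
  | (refine Or.inl ⟨iX, ?_⟩
     have h1 : iX' = iX := Fin.ext (by omega)
     simp only [h1]
     try (ext x; simp only [Finset.mem_insert, Finset.mem_singleton]; tauto))
  | (refine Or.inr (Or.inl ⟨iY, ?_⟩)
     have h1 : iY' = iY := Fin.ext (by omega)
     simp only [h1]
     try (ext x; simp only [Finset.mem_insert, Finset.mem_singleton]; tauto))
  | (refine Or.inr (Or.inr (Or.inl ⟨iZ, ?_⟩))
     have h1 : iZ' = iZ := Fin.ext (by omega)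
     simp only [h1]
     try (ext x; simp only [Finset.mem_insert, Finset.mem_singleton]; tauto))
  | (refine Or.inr (Or.inr (Or.inr ⟨l, ?_⟩))
     have h1 : (τ l').1 = (τ l).1 := Fin.ext (by omega)
     have h2 : (τ l').2.1 = (τ l).2.1 := Fin.ext (by omega)
     have h3 : (τ l').2.2 = (τ l).2.2 := Fin.ext (by omega)
     have hl : l' = l := hinj (Prod.ext_iff.mpr ⟨h1, Prod.ext_iff.mpr ⟨h2, h3⟩⟩)
     simp only [hl]
     try (ext x; simp only [Finset.mem_insert, Finset.mem_singleton]; tauto))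
end HIAux

/-- In the hard instance:
(i) four distinct jobs in `A ∪ B` have demands summing to `4000γ` iff there is a triplet
`τ_l = (x_i, y_j, z_k) ∈ 𝒯` such that the four jobs are `a_{X,i}, a_{Y,j}, a_{Z,k}, b_l`,
and likewise four distinct jobs in `A' ∪ B'` have demands summing to `4000γ` iff they are
`a'_{X,i}, a'_{Y,j}, a'_{Z,k}, b'_l` for some triplet `τ_l = (x_i, y_j, z_k) ∈ 𝒯`;
(ii) two distinct jobs in `A ∪ A' ∪ B ∪ B'` have widths summing to `40000γ` iff they are
peers. -/
theorem hard_instance_sums (q : ℕ) (hq : 1 ≤ q)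
    (τ : Fin (2 * q) → Fin q × Fin q × Fin q) (hτ : Hard.Is2B3DM q τ) :
    (∀ S : Finset (Idx q (Hard.ndN q)), S.card = 4 → (∀ idx ∈ S, idx.inAB) →
      ((∑ idx ∈ S, (Hard.jobOf q (Hard.ndN q) τ idx).d) = 4000 * Hard.γ q ↔
        ∃ l : Fin (2 * q),
          S = {Idx.aX (τ l).1, Idx.aY (τ l).2.1, Idx.aZ (τ l).2.2, Idx.b l})) ∧
    (∀ S : Finset (Idx q (Hard.ndN q)), S.card = 4 → (∀ idx ∈ S, idx.inA'B') →
      ((∑ idx ∈ S, (Hard.jobOf q (Hard.ndN q) τ idx).d) = 4000 * Hard.γ q ↔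
        ∃ l : Fin (2 * q),
          S = {Idx.aX' (τ l).1, Idx.aY' (τ l).2.1, Idx.aZ' (τ l).2.2, Idx.b' l})) ∧
    (∀ S : Finset (Idx q (Hard.ndN q)), S.card = 2 → (∀ idx ∈ S, ¬ idx.isDummy) →
      ((∑ idx ∈ S, (Hard.jobOf q (Hard.ndN q) τ idx).w) = 40000 * Hard.γ q ↔
        ((∃ i : Fin q, S = {Idx.aX i, Idx.aX' i}) ∨
         (∃ j : Fin q, S = {Idx.aY j, Idx.aY' j}) ∨
         (∃ k : Fin q, S = {Idx.aZ k, Idx.aZ' k}) ∨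
         (∃ l : Fin (2 * q), S = {Idx.b l, Idx.b' l})))) := by
  obtain ⟨hinj, -, -, -⟩ := hτ
  refine ⟨?_, ?_, ?_⟩
  · intro S hcard hmem
    constructor
    · intro hsum
      obtain ⟨a, b, c, d, hab, hac, had, hbc, hbd, hcd, rfl⟩ := HIAux.card4 hcard
      rw [Finset.sum_insert (by simp [hab, hac, had]),
          Finset.sum_insert (by simp [hbc, hbd]),
          Finset.sum_pair hcd] at hsum
      have ha := hmem a (by simp)
      have hb := hmem b (by simp)
      have hc := hmem c (by simp)
      have hd := hmem d (by simp)
      rw [HIAux.d_eq_AB τ a ha, HIAux.d_eq_AB τ b hb, HIAux.d_eq_AB τ c hc,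
          HIAux.d_eq_AB τ d hd] at hsum
      exact HIAux.fwdAB hq τ a b c d ha hb hc hd (by linarith)
    · rintro ⟨l, rfl⟩
      rw [Finset.sum_insert (by simp), Finset.sum_insert (by simp),
          Finset.sum_pair (by simp)]
      simp only [Hard.jobOf, Hard.x', Hard.y', Hard.z', Hard.τ', Hard.γ]
      push_cast
      ring
  · intro S hcard hmem
    constructor
    · intro hsum
      obtain ⟨a, b, c, d, hab, hac, had, hbc, hbd, hcd, rfl⟩ := HIAux.card4 hcard
      rw [Finset.sum_insert (by simp [hab, hac, had]),
          Finset.sum_insert (by simp [hbc, hbd]),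
          Finset.sum_pair hcd] at hsum
      have ha := hmem a (by simp)
      have hb := hmem b (by simp)
      have hc := hmem c (by simp)
      have hd := hmem d (by simp)
      rw [HIAux.d_eq_A'B' τ a ha, HIAux.d_eq_A'B' τ b hb, HIAux.d_eq_A'B' τ c hc,
          HIAux.d_eq_A'B' τ d hd] at hsum
      exact HIAux.fwdA'B' hq τ a b c d ha hb hc hd (by linarith)
    · rintro ⟨l, rfl⟩
      rw [Finset.sum_insert (by simp), Finset.sum_insert (by simp),
          Finset.sum_pair (by simp)]
      simp only [Hard.jobOf, Hard.x', Hard.y', Hard.z', Hard.τ', Hard.γ]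
      push_cast
      ring
  · intro S hcard hmem
    constructor
    · intro hsum
      obtain ⟨a, b, hab, rfl⟩ := Finset.card_eq_two.mp hcard
      rw [Finset.sum_pair hab] at hsum
      exact HIAux.fwdW hq τ hinj a b (hmem a (by simp)) (hmem b (by simp)) hsum
    · rintro (⟨i, rfl⟩ | ⟨j, rfl⟩ | ⟨k, rfl⟩ | ⟨l, rfl⟩) <;>
        rw [Finset.sum_pair (by simp)] <;>
        simp only [Hard.jobOf, Job.w, Hard.x', Hard.y', Hard.z', Hard.τ', Hard.γ] <;>
        push_cast <;> ring
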